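/- Every ν-Schröder tree is obtained from some ν-binary tree by a sequence of contractions (deletions of nodes that preserve the ν-Schröder tree property), and conversely every such contraction of a ν-binary tree yields a ν-Schröder tree. -/

import Mathlib

/-- Steps of a (Schröder) lattice path: north, east, diagonal. -/
inductive Step : Type
  | N | E | D
deriving DecidableEq, Repr

/-- Total horizontal displacement of a path. -/
def eLen (p : List Step) : ℕ := p.count Step.E + p.count Step.D

/-- Total vertical displacement of a path. -/
def nLen (p : List Step) : ℕ := p.count Step.N + p.count Step.D

/-- A lattice path uses only `N` and `E` steps. -/
def IsLatticePath (ν : List Step) : Prop := Step.D ∉ ν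

/-- `colVal p x` is twice the starting height of the step of `p` crossing the vertical
strip between abscissas `x` and `x+1`, plus `1` if that step is diagonal.  Comparing these
values columnwise is equivalent to comparing the heights of the paths over each strip. -/
def colVal : List Step → ℕ → ℕ
  | [], _ => 0
  | Step.N :: p, x => colVal p x + 2
  | Step.E :: _, 0 => 0
  | Step.E :: p, x+1 => colVal p x
  | Step.D :: _, 0 => 1
  | Step.D :: p, x+1 => colVal p x + 2

/-- `π` stays weakly above `ρ` (same endpoints intended). -/
def WeaklyAbove (π ρ : List Step) : Prop := ∀ x, colVal ρ x ≤ colVal π x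

/-- Replace every peak (consecutive `NE`) of a path by a diagonal step; applied to `ν`
this gives the path `μ` of the large ν-Schröder path definition. -/
def cutPeaks : List Step → List Step
  | [] => []
  | Step.N :: Step.E :: p => Step.D :: cutPeaks p
  | s :: p => s :: cutPeaks p

/-- A ν-Dyck path: an `N,E` path with the same endpoints as `ν` staying weakly above `ν`. -/
def IsNuDyck (ν π : List Step) : Prop :=
  Step.D ∉ π ∧ eLen π = eLen ν ∧ nLen π = nLen ν ∧ WeaklyAbove π ν

/-- A (small) ν-Schröder path: an `N,E,D` path with the same endpoints as `ν` staying weakly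
above `ν` (this automatically forbids diagonal steps on the ν-diagonal). -/
def IsSmallSchroder (ν π : List Step) : Prop :=
  eLen π = eLen ν ∧ nLen π = nLen ν ∧ WeaklyAbove π ν

/-- A large ν-Schröder path: an `N,E,D` path with the same endpoints as `ν` staying weakly
above the path obtained from `ν` by replacing each peak by a diagonal step. -/
def IsLargeSchroder (ν π : List Step) : Prop :=
  eLen π = eLen ν ∧ nLen π = nLen ν ∧ WeaklyAbove π (cutPeaks ν)

/-- Number of peaks (consecutive `NE` pairs). -/
def peaks (p : List Step) : ℕ := (p.zip p.tail).count (Step.N, Step.E)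

/-- Number of valleys (consecutive `EN` pairs). -/
def valleys (p : List Step) : ℕ := (p.zip p.tail).count (Step.E, Step.N)

/-- Lattice points at which valleys of a path occur (starting the path at `(x,y)`). -/
def valleyPts : List Step → ℕ → ℕ → List (ℕ × ℕ)
  | [], _, _ => []
  | Step.E :: p, x, y =>
      (if p.head? = some Step.N then [(x+1, y)] else []) ++ valleyPts p (x+1) y
  | Step.N :: p, x, y => valleyPts p x (y+1)
  | Step.D :: p, x, y => valleyPts p (x+1) (y+1)

/-- Lattice points at which high peaks (peaks strictly above `ν`) of a path occur. -/
def highPeakPts (ν : List Step) : List Step → ℕ → ℕ → List (ℕ × ℕ)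
  | [], _, _ => []
  | Step.N :: p, x, y =>
      (if p.head? = some Step.E ∧ colVal ν x < 2*(y+1) then [(x, y+1)] else []) ++
        highPeakPts ν p x (y+1)
  | Step.E :: p, x, y => highPeakPts ν p (x+1) y
  | Step.D :: p, x, y => highPeakPts ν p (x+1) (y+1)

/-- Number of high peaks of `π` relative to `ν`. -/
def highPeaks (ν π : List Step) : ℕ := (highPeakPts ν π 0 0).length

/-- j-th ν-Narayana number: number of ν-Dyck paths with exactly `j` valleys. -/
noncomputable def Nar (ν : List Step) (j : ℕ) : ℕ :=
  Nat.card {π : List Step // IsNuDyck ν π ∧ valleys π = j}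

/-- Number of small ν-Schröder paths with exactly `i` diagonal steps. -/
noncomputable def schNum (ν : List Step) (i : ℕ) : ℕ :=
  Nat.card {π : List Step // IsSmallSchroder ν π ∧ π.count Step.D = i}

/-- `lowH ν x` is the lowest height of a point of `ν` at abscissa `x`. -/
def lowH : List Step → ℕ → ℕ
  | _, 0 => 0
  | [], _+1 => 0
  | Step.N :: p, x+1 => lowH p (x+1) + 1
  | Step.E :: p, x+1 => lowH p x
  | Step.D :: p, x+1 => lowH p x + 1

/-- The lowest lattice path from `(0,0)` to `(b,a)` weakly above the line segment
from `(0,0)` to `(b,a)`. -/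
def nuAB (a b : ℕ) : List Step :=
  (List.range b).flatMap (fun x =>
    List.replicate (((x+1)*a + b - 1)/b - (x*a + b - 1)/b) Step.N ++ [Step.E])

/-- Number of large rational `(a,b)`-Schröder paths with `i` diagonal steps. -/
noncomputable def largeCount (a b i : ℕ) : ℕ :=
  Nat.card {π : List Step // IsLargeSchroder (nuAB a b) π ∧ π.count Step.D = i}

/-- Number of small rational `(a,b)`-Schröder paths with `i` diagonal steps. -/
noncomputable def smallCount (a b i : ℕ) : ℕ :=
  Nat.card {π : List Step // IsSmallSchroder (nuAB a b) π ∧ π.count Step.D = i}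

/-- Binomial coefficient with an integer lower entry (zero when negative). -/
def chooseZ (n : ℕ) (k : ℤ) : ℕ := if 0 ≤ k then n.choose k.toNat else 0

/-- The region weakly above `ν` in the rectangle `[0,b] × [0,a]`. -/
def InRegion (ν : List Step) (p : ℕ × ℕ) : Prop :=
  p.1 ≤ eLen ν ∧ p.2 ≤ nLen ν ∧ lowH ν p.1 ≤ p.2

/-- Two points of the region are ν-incompatible if one is strictly southwest of the other and
the rectangle they span lies in the region (equivalently its bottom-right corner does). -/
def Incompat (ν : List Step) (p q : ℕ × ℕ) : Prop :=
  ((p.1 < q.1 ∧ p.2 < q.2) ∨ (q.1 < p.1 ∧ q.2 < p.2)) ∧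
    InRegion ν (max p.1 q.1, min p.2 q.2)

/-- A ν-binary tree: a maximal set of pairwise ν-compatible points of the region. -/
def IsBinaryTree (ν : List Step) (T : Finset (ℕ × ℕ)) : Prop :=
  (∀ p ∈ T, InRegion ν p) ∧ (∀ p ∈ T, ∀ q ∈ T, ¬ Incompat ν p q) ∧
    ∀ r, InRegion ν r → (∀ p ∈ T, ¬ Incompat ν r p) → r ∈ T

/-- A ν-Schröder tree: pairwise ν-compatible points of the region containing the root
`(0,a)` and meeting every row and every column. -/
def IsSchroderTree (ν : List Step) (T : Finset (ℕ × ℕ)) : Prop :=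
  (∀ p ∈ T, InRegion ν p) ∧ (∀ p ∈ T, ∀ q ∈ T, ¬ Incompat ν p q) ∧
    (0, nLen ν) ∈ T ∧ (∀ y ≤ nLen ν, ∃ p ∈ T, p.2 = y) ∧ (∀ x ≤ eLen ν, ∃ p ∈ T, p.1 = x)

/-- One contraction step: delete a node, provided the result is still a ν-Schröder tree. -/
def ContractStep (ν : List Step) (T T' : Finset (ℕ × ℕ)) : Prop :=
  ∃ q ∈ T, T' = T.erase q ∧ IsSchroderTree ν T'

/-- `p` is a leaf of the (plane tree associated to the) node set `T`: no node strictly below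
it in its column and none strictly to its right in its row. -/
def IsLeafIn (T : Finset (ℕ × ℕ)) (p : ℕ × ℕ) : Prop :=
  (∀ q ∈ T, ¬(q.1 = p.1 ∧ q.2 < p.2)) ∧ (∀ q ∈ T, ¬(q.2 = p.2 ∧ p.1 < q.1))

/-- Starting points of vertical runs and ending points of horizontal runs of `ν`. -/
def leafPts (ν : List Step) : Finset (ℕ × ℕ) :=
  (valleyPts ν 0 0).toFinset ∪ (if ν.head? = some Step.N then {((0 : ℕ), (0 : ℕ))} else ∅) ∪
    (if ν.getLast? = some Step.E then {(eLen ν, nLen ν)} else ∅)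

/-- `horizNu ν x y`: maximal number of east steps that can be placed starting at `(x,y)`
before crossing `ν` (staying within the bounding rectangle). -/
def horizNu (ν : List Step) (x y : ℕ) : ℕ :=
  ((Finset.Icc 1 (eLen ν - x)).filter (fun k => lowH ν (x + k) ≤ y)).card

/-- No `N` step of the given path (started at `(x,y)`) has initial point with
`horizNu`-value `h`. -/
def noNAt (ν : List Step) (h : ℕ) : List Step → ℕ → ℕ → Prop
  | [], _, _ => True
  | Step.N :: p, x, y => horizNu ν x y ≠ h ∧ noNAt ν h p x (y+1)
  | Step.E :: p, x, y => noNAt ν h p (x+1) y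
  | Step.D :: p, x, y => noNAt ν h p (x+1) (y+1)

/-- Right contraction: replace a consecutive `EN` pair (a valley) by a `D` step. -/
def RightC (μ lam : List Step) : Prop :=
  ∃ p q, μ = p ++ Step.E :: Step.N :: q ∧ lam = p ++ Step.D :: q

/-- Left contraction: delete an `E` step together with the most recent preceding `N` step
whose initial point has the same `horizNu` statistic as the initial point of the `E` step,
shift the intermediate subpath, and place a `D` step at the initial point of the `N` step. -/
def LeftC (ν μ lam : List Step) : Prop :=
  ∃ p m q, μ = p ++ Step.N :: (m ++ Step.E :: q) ∧ lam = p ++ Step.D :: (m ++ q) ∧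
    horizNu ν (eLen p) (nLen p)
      = horizNu ν (eLen (p ++ Step.N :: m)) (nLen (p ++ Step.N :: m)) ∧
    noNAt ν (horizNu ν (eLen (p ++ Step.N :: m)) (nLen (p ++ Step.N :: m)))
      m (eLen p) (nLen p + 1)

/-- Diagonal contraction: delete an `E` step ending at the initial point `r` of a `D` step,
together with the most recent preceding `N` step whose initial point `s` satisfies
`horizNu s = horizNu r`, shift the intermediate subpath, and place a `D` step at `s`. -/
def DiagC (ν μ lam : List Step) : Prop :=
  ∃ p m q, μ = p ++ Step.N :: (m ++ Step.E :: Step.D :: q) ∧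
    lam = p ++ Step.D :: (m ++ Step.D :: q) ∧
    horizNu ν (eLen p) (nLen p)
      = horizNu ν (eLen (p ++ Step.N :: m) + 1) (nLen (p ++ Step.N :: m)) ∧
    noNAt ν (horizNu ν (eLen (p ++ Step.N :: m) + 1) (nLen (p ++ Step.N :: m)))
      m (eLen p) (nLen p + 1)

/-- Cover relation of the contraction poset of ν-Schröder paths. -/
def Covers (ν μ lam : List Step) : Prop :=
  IsSmallSchroder ν μ ∧ IsSmallSchroder ν lam ∧
    (RightC μ lam ∨ LeftC ν μ lam ∨ DiagC ν μ lam)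

/-- The Morse matching: `σ` (having a `D` step preceded by no valley) is matched with the
path `π` obtained by replacing the first such `D` step by `EN`. -/
def MorseM (ν : List Step) : Set (List Step × List Step) :=
  { z | ∃ p q, Step.D ∉ p ∧ valleys p = 0 ∧
      z.2 = p ++ Step.D :: q ∧ z.1 = p ++ Step.E :: Step.N :: q ∧ IsSmallSchroder ν z.2 }

/-- Twice the area between a small ν-Schröder path and `ν`. -/
def area2 (ν π : List Step) : ℕ :=
  ∑ x ∈ Finset.range (eLen ν), (colVal π x - colVal ν x)

/-- An `(I,J̄)`-forest: increasing, non-crossing arcs. -/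
def IsIJForest (I J : Finset ℕ) (F : Finset (ℕ × ℕ)) : Prop :=
  (∀ a ∈ F, a.1 ∈ I ∧ a.2 ∈ J ∧ a.1 < a.2) ∧
    (∀ a ∈ F, ∀ a' ∈ F, ¬(a.1 < a'.1 ∧ a'.1 < a.2 ∧ a.2 < a'.2))

/-- A covering `(I,J̄)`-forest: contains the arc `(1,n)` and has no isolated node. -/
def IsCoveringForest (n : ℕ) (I J : Finset ℕ) (F : Finset (ℕ × ℕ)) : Prop :=
  IsIJForest I J F ∧ (1, n) ∈ F ∧
    (∀ i ∈ I, ∃ a ∈ F, a.1 = i) ∧ (∀ j ∈ J, ∃ a ∈ F, a.2 = j)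

/-- The lattice path read off from the interleaving of `I` and `J̄` (elements `2,…,n-1`,
`E` for elements of `I`, `N` for the others). -/
def nuOf (n : ℕ) (I : Finset ℕ) : List Step :=
  (List.range' 2 (n - 2)).map (fun k => if k ∈ I then Step.E else Step.N)

/-!
A binary tree is a maximal compatible set, and maximality forces it to meet every row and
column: in row `y` the rightmost point `(x, y)` of the region that is not incompatible with a
node strictly to its left is compatible with every node, since a node `q` northeast of it with
`(q.1, y)` in the region would, by the choice of `x`, be incompatible with a node to its
southwest. Hence binary trees are Schröder trees, and so is every set squeezed between a
Schröder tree and a compatible set. Any Schröder tree extends to a maximal compatible set,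
from which its extra nodes can be deleted one at a time.
-/

def IsCompatibleSet (ν : List Step) (S : Finset (ℕ × ℕ)) : Prop :=
  (∀ p ∈ S, InRegion ν p) ∧ ∀ p ∈ S, ∀ q ∈ S, ¬ Incompat ν p q

variable {ν : List Step}

lemma lowH_zero (ν : List Step) : lowH ν 0 = 0 := by
  cases ν <;> rfl

lemma lowH_le_nLen (ν : List Step) (x : ℕ) : lowH ν x ≤ nLen ν := by
  fun_induction lowH ν x <;> simp_all [nLen] <;> omega

lemma inRegion_zero {y : ℕ} (hy : y ≤ nLen ν) : InRegion ν (0, y) :=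
  ⟨Nat.zero_le _, hy, by rw [lowH_zero]; exact Nat.zero_le _⟩

lemma Incompat.symm {p q : ℕ × ℕ} (h : Incompat ν p q) : Incompat ν q p :=
  ⟨h.1.symm, by rw [max_comm, min_comm]; exact h.2⟩

lemma incompat_iff_of_lt {p q : ℕ × ℕ} (h1 : p.1 < q.1) (h2 : p.2 < q.2) :
    Incompat ν p q ↔ InRegion ν (q.1, p.2) := by
  simp [Incompat, h1, h2, h1.le, h2.le]

lemma IsSchroderTree.isCompatibleSet {T : Finset (ℕ × ℕ)} (hT : IsSchroderTree ν T) :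
    IsCompatibleSet ν T :=
  ⟨hT.1, hT.2.1⟩

lemma IsBinaryTree.isCompatibleSet {B : Finset (ℕ × ℕ)} (hB : IsBinaryTree ν B) :
    IsCompatibleSet ν B :=
  ⟨hB.1, hB.2.1⟩

lemma IsCompatibleSet.mono {S B : Finset (ℕ × ℕ)} (hB : IsCompatibleSet ν B) (hSB : S ⊆ B) :
    IsCompatibleSet ν S :=
  ⟨fun p hp => hB.1 p (hSB hp), fun p hp q hq => hB.2 p (hSB hp) q (hSB hq)⟩

lemma IsCompatibleSet.insert {S : Finset (ℕ × ℕ)} {r : ℕ × ℕ} (hS : IsCompatibleSet ν S)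
    (hr : InRegion ν r) (hrS : ∀ p ∈ S, ¬ Incompat ν r p) : IsCompatibleSet ν (insert r S) := by
  refine ⟨?_, ?_⟩
  · simp only [Finset.mem_insert, forall_eq_or_imp]
    exact ⟨hr, hS.1⟩
  · have hrr : ¬ Incompat ν r r := by rintro ⟨h | h, -⟩ <;> exact lt_irrefl _ h.1
    simp only [Finset.mem_insert, forall_eq_or_imp]
    exact ⟨⟨hrr, hrS⟩, fun p hp => ⟨fun h => hrS p hp h.symm, hS.2 p hp⟩⟩

lemma IsCompatibleSet.subset_grid {S : Finset (ℕ × ℕ)} (hS : IsCompatibleSet ν S) :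
    S ⊆ Finset.range (eLen ν + 1) ×ˢ Finset.range (nLen ν + 1) := fun p hp => by
  simp only [Finset.mem_product, Finset.mem_range, Nat.lt_succ_iff]
  exact ⟨(hS.1 p hp).1, (hS.1 p hp).2.1⟩

lemma exists_isBinaryTree_superset {T : Finset (ℕ × ℕ)} (hT : IsCompatibleSet ν T) :
    ∃ B, IsBinaryTree ν B ∧ T ⊆ B := by
  have hfin : {S | T ⊆ S ∧ IsCompatibleSet ν S}.Finite :=
    (Finset.range (eLen ν + 1) ×ˢ Finset.range (nLen ν + 1)).powerset.finite_toSet.subset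
      fun S hS => Finset.mem_powerset.2 hS.2.subset_grid
  obtain ⟨B, hTB, hBmax⟩ := hfin.exists_le_maximal ⟨le_rfl, hT⟩
  obtain ⟨-, hB⟩ := hBmax.prop
  refine ⟨B, ⟨hB.1, hB.2, fun r hr hrB => ?_⟩, hTB⟩
  have hins : T ⊆ insert r B ∧ IsCompatibleSet ν (insert r B) :=
    ⟨hTB.trans (Finset.subset_insert r B), hB.insert hr hrB⟩
  exact hBmax.le_of_ge hins (Finset.subset_insert r B) (Finset.mem_insert_self r B)

lemma IsCompatibleSet.exists_compatible_in_row {B : Finset (ℕ × ℕ)} (hB : IsCompatibleSet ν B)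
    {y : ℕ} (hy : y ≤ nLen ν) :
    ∃ x, InRegion ν (x, y) ∧ ∀ q ∈ B, ¬ Incompat ν (x, y) q := by
  classical
  let P x := InRegion ν (x, y) ∧ ∀ q ∈ B, q.1 < x → ¬ Incompat ν q (x, y)
  have hP0 : P 0 := ⟨inRegion_zero hy, fun q _ hq => absurd hq (Nat.not_lt_zero _)⟩
  obtain ⟨hreg, hleft⟩ : P (Nat.findGreatest P (eLen ν)) :=
    Nat.findGreatest_spec (Nat.zero_le _) hP0
  refine ⟨_, hreg, fun q hq hinc => ?_⟩
  rcases hinc with ⟨hlt | hlt, hcorner⟩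
  · rw [max_eq_right hlt.1.le, min_eq_left hlt.2.le] at hcorner
    have hq : ¬ P q.1 := Nat.findGreatest_is_greatest hlt.1 hcorner.1
    simp only [P, hcorner, true_and, not_forall, not_not] at hq
    obtain ⟨q', hq'B, hq'q, hinc'⟩ := hq
    rcases hinc' with ⟨h' | h', hcorner'⟩
    · rw [max_eq_right h'.1.le, min_eq_left h'.2.le] at hcorner'
      exact hB.2 q' hq'B q hq
        ((incompat_iff_of_lt hq'q (h'.2.trans hlt.2)).2 hcorner')
    · exact absurd hq'q (not_lt.2 h'.1.le)
  · exact hleft q hq hlt.1 ⟨Or.inl hlt, by rw [max_comm, min_comm]; exact hcorner⟩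

lemma IsCompatibleSet.exists_compatible_in_column {B : Finset (ℕ × ℕ)}
    (hB : IsCompatibleSet ν B) {x : ℕ} (hx : x ≤ eLen ν) :
    ∃ y, InRegion ν (x, y) ∧ ∀ q ∈ B, ¬ Incompat ν (x, y) q := by
  classical
  let P y := InRegion ν (x, y) ∧ ∀ q ∈ B, x < q.1 → ¬ Incompat ν (x, y) q
  have hPtop : P (nLen ν) :=
    ⟨⟨hx, le_rfl, lowH_le_nLen ν x⟩, fun q hq hxq hinc => by
      rcases hinc with ⟨h | h, -⟩
      · exact absurd h.2 (not_lt.2 (hB.1 q hq).2.1)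
      · exact absurd h.1 (not_lt.2 hxq.le)⟩
  obtain ⟨hreg, hright⟩ : P (Nat.find ⟨_, hPtop⟩) := Nat.find_spec ⟨_, hPtop⟩
  refine ⟨_, hreg, fun q hq hinc => ?_⟩
  rcases hinc with ⟨hlt | hlt, hcorner⟩
  · exact hright q hq hlt.1 ⟨Or.inl hlt, hcorner⟩
  · rw [max_eq_left hlt.1.le, min_eq_right hlt.2.le] at hcorner
    have hq : ¬ P q.2 := Nat.find_min _ hlt.2
    simp only [P, hcorner, true_and, not_forall, not_not] at hq
    obtain ⟨q', hq'B, hxq', hinc'⟩ := hq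
    rcases hinc' with ⟨h' | h', hcorner'⟩
    · rw [max_eq_right h'.1.le, min_eq_left h'.2.le] at hcorner'
      exact hB.2 q hq q' hq'B ((incompat_iff_of_lt (hlt.1.trans hxq') h'.2).2 hcorner')
    · exact absurd hxq' (not_lt.2 h'.1.le)

lemma IsBinaryTree.isSchroderTree {B : Finset (ℕ × ℕ)} (hB : IsBinaryTree ν B) :
    IsSchroderTree ν B := by
  obtain ⟨hreg, hcomp, hmax⟩ := hB
  have hBc : IsCompatibleSet ν B := ⟨hreg, hcomp⟩
  refine ⟨hreg, hcomp, hmax _ (inRegion_zero le_rfl) ?_, fun y hy => ?_, fun x hx => ?_⟩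
  · rintro p hp ⟨h | h, -⟩
    · exact absurd h.2 (not_lt.2 (hreg p hp).2.1)
    · exact absurd h.1 (Nat.not_lt_zero _)
  · obtain ⟨x, hr, hc⟩ := hBc.exists_compatible_in_row hy
    exact ⟨(x, y), hmax _ hr hc, rfl⟩
  · obtain ⟨y, hr, hc⟩ := hBc.exists_compatible_in_column hx
    exact ⟨(x, y), hmax _ hr hc, rfl⟩

lemma IsSchroderTree.of_subset {T S : Finset (ℕ × ℕ)} (hT : IsSchroderTree ν T) (hTS : T ⊆ S)
    (hS : IsCompatibleSet ν S) : IsSchroderTree ν S := by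
  obtain ⟨-, -, hroot, hrow, hcol⟩ := hT
  exact ⟨hS.1, hS.2, hTS hroot,
    fun y hy => (hrow y hy).imp fun p hp => ⟨hTS hp.1, hp.2⟩,
    fun x hx => (hcol x hx).imp fun p hp => ⟨hTS hp.1, hp.2⟩⟩

lemma reflTransGen_contractStep_of_subset {T B : Finset (ℕ × ℕ)} (hT : IsSchroderTree ν T)
    (hB : IsCompatibleSet ν B) (hTB : T ⊆ B) : Relation.ReflTransGen (ContractStep ν) B T := by
  induction B using Finset.strongInduction with
  | H S ih =>
    by_cases hST : S ⊆ T
    · rw [hST.antisymm hTB]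
    obtain ⟨q, hqS, hqT⟩ := Finset.not_subset.1 hST
    have hTS' : T ⊆ S.erase q := fun p hp =>
      Finset.mem_erase.2 ⟨ne_of_mem_of_not_mem hp hqT, hTB hp⟩
    have hS' : IsCompatibleSet ν (S.erase q) := hB.mono (Finset.erase_subset q S)
    exact .head ⟨q, hqS, rfl, hT.of_subset hTS' hS'⟩
      (ih _ (Finset.erase_ssubset hqS) hS' hTS')

lemma IsSchroderTree.of_reflTransGen_contractStep {B T : Finset (ℕ × ℕ)}
    (hB : IsSchroderTree ν B) (h : Relation.ReflTransGen (ContractStep ν) B T) :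
    IsSchroderTree ν T := by
  induction h with
  | refl => exact hB
  | tail _ hstep _ => exact hstep.choose_spec.2.2

theorem schroderTree_iff_contraction_of_binary_general (ν : List Step) :
    (∀ T : Finset (ℕ × ℕ), IsSchroderTree ν T →
      ∃ B : Finset (ℕ × ℕ), IsBinaryTree ν B ∧ Relation.ReflTransGen (ContractStep ν) B T) ∧
    (∀ B T : Finset (ℕ × ℕ), IsBinaryTree ν B →
      Relation.ReflTransGen (ContractStep ν) B T → IsSchroderTree ν T) := by
  refine ⟨fun T hT => ?_, fun B T hB h => hB.isSchroderTree.of_reflTransGen_contractStep h⟩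
  obtain ⟨B, hB, hTB⟩ := exists_isBinaryTree_superset hT.isCompatibleSet
  exact ⟨B, hB, reflTransGen_contractStep_of_subset hT hB.isCompatibleSet hTB⟩

/-- Every ν-Schröder tree is obtained from some ν-binary tree by a sequence
of contractions, and conversely every sequence of contractions of a ν-binary tree yields a
ν-Schröder tree. -/
theorem schroderTree_iff_contraction_of_binary (ν : List Step) (hν : IsLatticePath ν) :
    (∀ T : Finset (ℕ × ℕ), IsSchroderTree ν T →
      ∃ B : Finset (ℕ × ℕ), IsBinaryTree ν B ∧ Relation.ReflTransGen (ContractStep ν) B T) ∧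
    (∀ B T : Finset (ℕ × ℕ), IsBinaryTree ν B →
      Relation.ReflTransGen (ContractStep ν) B T → IsSchroderTree ν T) :=
  schroderTree_iff_contraction_of_binary_general ν
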